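/- Let A ∈ ℝ^{n×n} be symmetric and invertible, W ∈ ℝ^{n×n} symmetric positive definite, and let S_1, …, S_r with S_i ∈ ℝ^{n×q_i} each have full column rank, with probabilities p_i > 0, Σ_{i=1}^r p_i = 1. Fix a symmetric X_0 ∈ ℝ^{n×n}; for each path s = (s_0, …, s_{k−1}) ∈ {1,…,r}^k define X_k(s) recursively by the symmetric update X_{j+1}(s) = A^{-1} + (I − W Z_{s_j})(X_j(s) − A^{-1})(I − Z_{s_j} W), where Z_i := A S_i (S_i^T A W A S_i)^{-1} S_i^T A. Then, with ρ := 1 − λ_min(W^{1/2}(Σ_{i=1}^r p_i Z_i)W^{1/2}), the expected squared error satisfies Σ_{s ∈ {1,…,r}^k} (Π_{j<k} p_{s_j}) ‖X_k(s) − A^{-1}‖_{F(W^{-1})}² ≤ ρ^k ‖X_0 − A^{-1}‖_{F(W^{-1})}². -/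

import Mathlib

/-!
Whitening by `M = W^{1/2}` turns `‖X - A⁻¹‖_{F(W⁻¹)}` into the Frobenius norm of
`Y = M⁻¹ (X - A⁻¹) M⁻¹`, and a step with sketch `S_i` into `Y ↦ (1 - P_i) Y (1 - P_i)`,
where `P_i = M Z_i M` is an orthogonal projection. For an orthogonal projection
`‖(1 - P) Y (1 - P)‖² ≤ ‖Y‖² - tr (Yᵀ P Y)`, so averaging over `i` gives
`‖Y‖² - tr (Yᵀ P̄ Y) ≤ (1 - λ_min P̄) ‖Y‖²` with `P̄ = ∑ p_i P_i = M (∑ p_i Z_i) M`.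
This one-step contraction, iterated along every path, gives the factor `ρ^k`.
-/

open Matrix BigOperators

/-- Squared weighted Frobenius norm: `‖X‖_{F(W⁻¹)}² = Tr(Xᵀ W⁻¹ X W⁻¹)`. -/
noncomputable def wFNormSq {n : ℕ} (W X : Matrix (Fin n) (Fin n) ℝ) : ℝ :=
  (Xᵀ * W⁻¹ * X * W⁻¹).trace

/-- `Z = A S (Sᵀ A W A S)⁻¹ Sᵀ A` (symmetric variant, `A` symmetric). -/
noncomputable def ZmatSym {n q : ℕ} (A W : Matrix (Fin n) (Fin n) ℝ)
    (S : Matrix (Fin n) (Fin q) ℝ) : Matrix (Fin n) (Fin n) ℝ :=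
  A * S * (Sᵀ * A * W * A * S)⁻¹ * Sᵀ * A

/-- One step of the symmetric sketch-and-project method, in fixed-point form. -/
noncomputable def symStep {n q : ℕ} (A W : Matrix (Fin n) (Fin n) ℝ)
    (S : Matrix (Fin n) (Fin q) ℝ) (X : Matrix (Fin n) (Fin n) ℝ) :
    Matrix (Fin n) (Fin n) ℝ :=
  A⁻¹ + (1 - W * ZmatSym A W S) * (X - A⁻¹) * (1 - ZmatSym A W S * W)

/-- The square root `Matrix.PosSemidef.sqrt` of the older Mathlib, spelled out. -/
noncomputable def posSemidefSqrtOld {n : ℕ} {W : Matrix (Fin n) (Fin n) ℝ} (hA : W.PosSemidef) :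
    Matrix (Fin n) (Fin n) ℝ :=
  hA.1.eigenvectorUnitary.1 * diagonal ((↑) ∘ (√·) ∘ hA.1.eigenvalues) *
    (star hA.1.eigenvectorUnitary : Matrix (Fin n) (Fin n) ℝ)

open scoped MatrixOrder

namespace Matrix

variable {m : Type*} [Fintype m]

lemma transpose_eq_of_isStarProjection {P : Matrix m m ℝ} (hP : IsStarProjection P) :
    Pᵀ = P := by
  rw [← conjTranspose_eq_transpose_of_trivial]
  exact hP.isSelfAdjoint

lemma trace_transpose_mul_self_nonneg {k : Type*} [Fintype k] (B : Matrix k m ℝ) :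
    0 ≤ (Bᵀ * B).trace := by
  simpa using (posSemidef_conjTranspose_mul_self B).trace_nonneg

lemma trace_transpose_mul_self_conj_of_isStarProjection {P Q : Matrix m m ℝ}
    (hP : IsStarProjection P) (hQ : IsStarProjection Q) (Y : Matrix m m ℝ) :
    ((P * Y * Q)ᵀ * (P * Y * Q)).trace = (Yᵀ * P * Y * Q).trace := by
  calc ((P * Y * Q)ᵀ * (P * Y * Q)).trace = (Q * (Yᵀ * (P * P) * Y * Q)).trace := by
        rw [transpose_mul, transpose_mul, transpose_eq_of_isStarProjection hP,
          transpose_eq_of_isStarProjection hQ]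
        noncomm_ring
    _ = (Yᵀ * (P * P) * Y * (Q * Q)).trace := by
        rw [trace_mul_comm]; simp only [Matrix.mul_assoc]
    _ = (Yᵀ * P * Y * Q).trace := by rw [hP.isIdempotentElem.eq, hQ.isIdempotentElem.eq]

lemma trace_transpose_mul_self_conj_one_sub_le [DecidableEq m] {P : Matrix m m ℝ}
    (hP : IsStarProjection P) (Y : Matrix m m ℝ) :
    (((1 - P) * Y * (1 - P))ᵀ * ((1 - P) * Y * (1 - P))).trace ≤
      (Yᵀ * Y).trace - (Yᵀ * P * Y).trace := by
  have hQ := hP.one_sub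
  -- `tr (Yᵀ Q Y) = ‖Q Y Q‖² + ‖Q Y P‖²` for `Q = 1 - P`; drop the second square.
  have hsplit : (Yᵀ * (1 - P) * Y * (1 - P)).trace + (Yᵀ * (1 - P) * Y * P).trace =
      (Yᵀ * Y).trace - (Yᵀ * P * Y).trace := by
    rw [← trace_add, ← trace_sub]; congr 1; noncomm_ring
  rw [trace_transpose_mul_self_conj_of_isStarProjection hQ hQ, ← hsplit,
    ← trace_transpose_mul_self_conj_of_isStarProjection hQ hP, le_add_iff_nonneg_right]
  exact trace_transpose_mul_self_nonneg _

lemma sum_mul_trace_transpose_mul_self_conj_one_sub_le [DecidableEq m] {ι : Type*} [Fintype ι]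
    {P : ι → Matrix m m ℝ} (hP : ∀ i, IsStarProjection (P i)) {p : ι → ℝ} (hp : ∀ i, 0 ≤ p i)
    (hsum : ∑ i, p i = 1) {μ : ℝ} (hμ : (∑ i, p i • P i - μ • 1).PosSemidef)
    (Y : Matrix m m ℝ) :
    ∑ i, p i * (((1 - P i) * Y * (1 - P i))ᵀ * ((1 - P i) * Y * (1 - P i))).trace ≤
      (1 - μ) * (Yᵀ * Y).trace := by
  have hlow : μ * (Yᵀ * Y).trace ≤ ∑ i, p i * (Yᵀ * P i * Y).trace := by
    have h := (hμ.conjTranspose_mul_mul_same Y).trace_nonneg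
    simp only [conjTranspose_eq_transpose_of_trivial, Matrix.mul_sub, Matrix.sub_mul,
      Matrix.mul_sum, Matrix.sum_mul, mul_smul_comm, smul_mul_assoc, Matrix.mul_one,
      trace_sub, trace_sum, trace_smul, smul_eq_mul] at h
    linarith
  calc ∑ i, p i * (((1 - P i) * Y * (1 - P i))ᵀ * ((1 - P i) * Y * (1 - P i))).trace
      ≤ ∑ i, p i * ((Yᵀ * Y).trace - (Yᵀ * P i * Y).trace) :=
        Finset.sum_le_sum fun i _ => mul_le_mul_of_nonneg_left
          (trace_transpose_mul_self_conj_one_sub_le (hP i) Y) (hp i)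
    _ = (Yᵀ * Y).trace - ∑ i, p i * (Yᵀ * P i * Y).trace := by
        simp only [mul_sub, Finset.sum_sub_distrib, ← Finset.sum_mul, hsum, one_mul]
    _ ≤ (1 - μ) * (Yᵀ * Y).trace := by linarith

lemma posSemidef_one_sub_sum_smul [DecidableEq m] {ι : Type*} [Fintype ι]
    {P : ι → Matrix m m ℝ} (hP : ∀ i, IsStarProjection (P i)) {p : ι → ℝ} (hp : ∀ i, 0 ≤ p i)
    (hsum : ∑ i, p i = 1) : (1 - ∑ i, p i • P i).PosSemidef := by
  have h : 1 - ∑ i, p i • P i = ∑ i, p i • (1 - P i) := by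
    simp only [smul_sub, Finset.sum_sub_distrib, ← Finset.sum_smul, hsum, one_smul]
  rw [h]
  exact posSemidef_sum _ fun i _ => (nonneg_iff_posSemidef.mp (hP i).one_sub_nonneg).smul (hp i)

namespace IsHermitian

variable [DecidableEq m] {B : Matrix m m ℝ}

lemma posSemidef_sub_iInf_eigenvalues_smul_one (hB : B.IsHermitian) :
    (B - (⨅ j, hB.eigenvalues j) • 1).PosSemidef := by
  rw [posSemidef_iff_isHermitian_and_spectrum_nonneg, ← Algebra.algebraMap_eq_smul_one,
    ← spectrum.sub_singleton_eq, hB.spectrum_real_eq_range_eigenvalues]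
  refine ⟨hB.sub (isHermitian_diagonal _), ?_⟩
  rintro _ ⟨_, ⟨j, rfl⟩, _, rfl, rfl⟩
  exact sub_nonneg.mpr (ciInf_le (Finite.bddBelow_range hB.eigenvalues) j)

lemma iInf_eigenvalues_le_one (hB : B.IsHermitian) (h : (1 - B).PosSemidef) :
    ⨅ j, hB.eigenvalues j ≤ 1 := by
  cases isEmpty_or_nonempty m
  · -- over an empty index type the infimum is the junk value `0`
    simp [Real.iInf_of_isEmpty]
  · obtain ⟨j⟩ := ‹Nonempty m›
    have hdiag := (hB.posSemidef_sub_iInf_eigenvalues_smul_one.add h).diag_nonneg (i := j)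
    have hsplit : B - (⨅ j, hB.eigenvalues j) • 1 + (1 - B) =
        (1 - ⨅ j, hB.eigenvalues j) • 1 := by
      rw [sub_smul, one_smul]; abel
    rw [hsplit, smul_apply, one_apply_eq, smul_eq_mul, mul_one] at hdiag
    linarith

end IsHermitian

end Matrix

lemma Matrix.mulVec_injective_of_rank_eq_card {K m k : Type*} [Field K] [Fintype m] [Fintype k]
    {S : Matrix m k K} (hS : S.rank = Fintype.card k) : Function.Injective S.mulVec := by
  have hker : Module.finrank K (LinearMap.ker S.mulVecLin) = 0 := by
    have := LinearMap.finrank_range_add_finrank_ker S.mulVecLin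
    rw [Module.finrank_fintype_fun_eq_card, ← rank, hS] at this
    omega
  exact LinearMap.ker_eq_bot.mp (Submodule.finrank_eq_zero.mp hker)

lemma sum_prod_mul_foldl_ofFn_le_pow {ι α : Type*} [Fintype ι] (f : ι → α → α) (V : α → ℝ)
    {p : ι → ℝ} (hp : ∀ i, 0 ≤ p i) {ρ : ℝ} (hρ : 0 ≤ ρ)
    (hstep : ∀ x, ∑ i, p i * V (f i x) ≤ ρ * V x) (k : ℕ) (x : α) :
    ∑ s : Fin k → ι, (∏ j, p (s j)) * V ((List.ofFn s).foldl (fun y i => f i y) x) ≤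
      ρ ^ k * V x := by
  induction k generalizing x with
  | zero => simp
  | succ k ih =>
    calc ∑ s : Fin (k + 1) → ι, (∏ j, p (s j)) * V ((List.ofFn s).foldl (fun y i => f i y) x)
        = ∑ i, p i * ∑ t : Fin k → ι,
            (∏ j, p (t j)) * V ((List.ofFn t).foldl (fun y i => f i y) (f i x)) := by
          rw [← (Fin.consEquiv fun _ => ι).sum_comp, Fintype.sum_prod_type]
          simp [Fin.consEquiv, Fin.prod_univ_succ, List.ofFn_succ, Finset.mul_sum, mul_assoc]
      _ ≤ ∑ i, p i * (ρ ^ k * V (f i x)) :=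
          Finset.sum_le_sum fun i _ => mul_le_mul_of_nonneg_left (ih (f i x)) (hp i)
      _ = ρ ^ k * ∑ i, p i * V (f i x) := by
          rw [Finset.mul_sum]; exact Finset.sum_congr rfl fun i _ => by ring
      _ ≤ ρ ^ (k + 1) * V x := by
          rw [pow_succ, mul_assoc]
          exact mul_le_mul_of_nonneg_left (hstep x) (pow_nonneg hρ k)

lemma posSemidefSqrtOld_eq_cfc {n : ℕ} {W : Matrix (Fin n) (Fin n) ℝ} (hW : W.PosSemidef) :
    posSemidefSqrtOld hW = cfc Real.sqrt W := by
  rw [hW.1.cfc_eq]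
  rfl

lemma transpose_posSemidefSqrtOld {n : ℕ} {W : Matrix (Fin n) (Fin n) ℝ} (hW : W.PosSemidef) :
    (posSemidefSqrtOld hW)ᵀ = posSemidefSqrtOld hW := by
  rw [posSemidefSqrtOld_eq_cfc]
  exact (cfc_predicate Real.sqrt W : IsSelfAdjoint _)

lemma posSemidefSqrtOld_mul_self {n : ℕ} {W : Matrix (Fin n) (Fin n) ℝ} (hW : W.PosSemidef) :
    posSemidefSqrtOld hW * posSemidefSqrtOld hW = W := by
  rw [posSemidefSqrtOld_eq_cfc, ← cfc_mul Real.sqrt Real.sqrt W]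
  conv_rhs => rw [← cfc_id ℝ W]
  exact cfc_congr fun x hx => Real.mul_self_sqrt (spectrum_nonneg_of_nonneg hW.nonneg hx)

section Sketch

variable {n q : ℕ} {A W : Matrix (Fin n) (Fin n) ℝ} {S : Matrix (Fin n) (Fin q) ℝ}

lemma transpose_ZmatSym (hAsym : Aᵀ = A) (hWsym : Wᵀ = W) :
    (ZmatSym A W S)ᵀ = ZmatSym A W S := by
  simp only [ZmatSym, transpose_mul, transpose_transpose, transpose_nonsing_inv, hAsym,
    hWsym, Matrix.mul_assoc]

lemma ZmatSym_mul_mul_self (hA : IsUnit A.det) (hAsym : Aᵀ = A) (hW : W.PosDef)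
    (hS : S.rank = q) : ZmatSym A W S * W * ZmatSym A W S = ZmatSym A W S := by
  have hAS : Function.Injective (A * S).mulVec := by
    have hcomp : (A * S).mulVec = A.mulVec ∘ S.mulVec :=
      funext fun v => (mulVec_mulVec v A S).symm
    rw [hcomp]
    exact (mulVec_injective_iff_isUnit.mpr ((isUnit_iff_isUnit_det A).mpr hA)).comp
      (mulVec_injective_of_rank_eq_card (by simpa using hS))
  have hG : (Sᵀ * A * W * A * S).PosDef := by
    have := hW.conjTranspose_mul_mul_same hAS
    simpa [conjTranspose_eq_transpose_of_trivial, transpose_mul, hAsym, Matrix.mul_assoc] using this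
  have hGinv : (Sᵀ * A * W * A * S)⁻¹ * (Sᵀ * A * W * A * S) = 1 :=
    nonsing_inv_mul _ ((isUnit_iff_isUnit_det _).mp hG.isUnit)
  calc ZmatSym A W S * W * ZmatSym A W S
      = A * S * ((Sᵀ * A * W * A * S)⁻¹ * (Sᵀ * A * W * A * S)) * (Sᵀ * A * W * A * S)⁻¹ *
          Sᵀ * A := by
        simp only [ZmatSym, Matrix.mul_assoc]
    _ = ZmatSym A W S := by rw [hGinv, Matrix.mul_one]; rfl

end Sketch

section Whitening

variable {m : Type*} [Fintype m] {M W : Matrix m m ℝ}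

lemma isStarProjection_mul_mul_of_mul_mul_self (hMs : Mᵀ = M) (hMM : M * M = W)
    {Z : Matrix m m ℝ} (hZs : Zᵀ = Z) (hZWZ : Z * W * Z = Z) : IsStarProjection (M * Z * M) where
  isIdempotentElem := by
    calc M * Z * M * (M * Z * M) = M * (Z * (M * M) * Z) * M := by simp only [Matrix.mul_assoc]
      _ = M * Z * M := by rw [hMM, hZWZ]
  isSelfAdjoint := by
    rw [IsSelfAdjoint, star_eq_conjTranspose, conjTranspose_eq_transpose_of_trivial,
      transpose_mul, transpose_mul, hMs, hZs, Matrix.mul_assoc]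

lemma inv_mul_one_sub_mul_mul_one_sub_mul_inv [DecidableEq m] (hM : IsUnit M.det)
    (hMM : M * M = W) (Z R : Matrix m m ℝ) :
    M⁻¹ * ((1 - W * Z) * R * (1 - Z * W)) * M⁻¹ =
      (1 - M * Z * M) * (M⁻¹ * R * M⁻¹) * (1 - M * Z * M) := by
  have hMW : M⁻¹ * W = M := by rw [← hMM, ← Matrix.mul_assoc, nonsing_inv_mul _ hM, Matrix.one_mul]
  have hWM : W * M⁻¹ = M := by rw [← hMM, Matrix.mul_assoc, mul_nonsing_inv _ hM, Matrix.mul_one]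
  have hl : M⁻¹ * (1 - W * Z) = (1 - M * Z * M) * M⁻¹ := by
    rw [Matrix.mul_sub, Matrix.sub_mul, ← Matrix.mul_assoc, hMW, Matrix.mul_assoc M Z M,
      Matrix.mul_assoc, Matrix.mul_assoc, mul_nonsing_inv _ hM]
    simp
  have hr : (1 - Z * W) * M⁻¹ = M⁻¹ * (1 - M * Z * M) := by
    rw [Matrix.mul_sub, Matrix.sub_mul, Matrix.mul_assoc, hWM, ← Matrix.mul_assoc,
      ← Matrix.mul_assoc, nonsing_inv_mul _ hM]
    simp
  calc M⁻¹ * ((1 - W * Z) * R * (1 - Z * W)) * M⁻¹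
      = (M⁻¹ * (1 - W * Z)) * R * ((1 - Z * W) * M⁻¹) := by simp only [Matrix.mul_assoc]
    _ = (1 - M * Z * M) * (M⁻¹ * R * M⁻¹) * (1 - M * Z * M) := by
        rw [hl, hr]; simp only [Matrix.mul_assoc]

end Whitening

lemma wFNormSq_eq_trace {n : ℕ} {M W : Matrix (Fin n) (Fin n) ℝ} (hMs : Mᵀ = M)
    (hMM : M * M = W) (R : Matrix (Fin n) (Fin n) ℝ) :
    wFNormSq W R = ((M⁻¹ * R * M⁻¹)ᵀ * (M⁻¹ * R * M⁻¹)).trace := by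
  calc wFNormSq W R = (M⁻¹ * (M⁻¹ * Rᵀ * M⁻¹ * M⁻¹ * R)).trace := by
        rw [wFNormSq, ← hMM, Matrix.mul_inv_rev, trace_mul_comm]; simp only [Matrix.mul_assoc]
    _ = (M⁻¹ * Rᵀ * M⁻¹ * M⁻¹ * R * M⁻¹).trace := by rw [trace_mul_comm]
    _ = ((M⁻¹ * R * M⁻¹)ᵀ * (M⁻¹ * R * M⁻¹)).trace := by
        rw [transpose_mul, transpose_mul, transpose_nonsing_inv, hMs]; simp only [Matrix.mul_assoc]

lemma sum_mul_wFNormSq_symStep_sub_le {n r : ℕ} {A W M : Matrix (Fin n) (Fin n) ℝ}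
    {q : Fin r → ℕ} {S : ∀ i, Matrix (Fin n) (Fin (q i)) ℝ} (hM : IsUnit M.det)
    (hMs : Mᵀ = M) (hMM : M * M = W) (hP : ∀ i, IsStarProjection (M * ZmatSym A W (S i) * M))
    {p : Fin r → ℝ} (hp : ∀ i, 0 ≤ p i) (hsum : ∑ i, p i = 1) {μ : ℝ}
    (hμ : (∑ i, p i • (M * ZmatSym A W (S i) * M) - μ • 1).PosSemidef)
    (X : Matrix (Fin n) (Fin n) ℝ) :
    ∑ i, p i * wFNormSq W (symStep A W (S i) X - A⁻¹) ≤ (1 - μ) * wFNormSq W (X - A⁻¹) := by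
  simp only [wFNormSq_eq_trace hMs hMM, symStep, add_sub_cancel_left,
    inv_mul_one_sub_mul_mul_one_sub_mul_inv hM hMM]
  exact sum_mul_trace_transpose_mul_self_conj_one_sub_le hP hp hsum hμ _

theorem stmt13_general {n r : ℕ} (A W : Matrix (Fin n) (Fin n) ℝ)
    (q : Fin r → ℕ) (S : ∀ i, Matrix (Fin n) (Fin (q i)) ℝ)
    (hA : IsUnit A.det) (hAsym : Aᵀ = A) (hW : W.PosDef)
    (hS : ∀ i, (S i).rank = q i)
    (p : Fin r → ℝ) (hp : ∀ i, 0 < p i) (hsum : ∑ i, p i = 1)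
    (X0 : Matrix (Fin n) (Fin n) ℝ) (k : ℕ)
    (hM : (posSemidefSqrtOld hW.posSemidef * (∑ i, p i • ZmatSym A W (S i)) *
      posSemidefSqrtOld hW.posSemidef).IsHermitian) :
    ∑ s : Fin k → Fin r, (∏ j, p (s j)) *
        wFNormSq W ((List.ofFn s).foldl (fun X i => symStep A W (S i) X) X0 - A⁻¹) ≤
      (1 - ⨅ j, hM.eigenvalues j) ^ k * wFNormSq W (X0 - A⁻¹) := by
  have hlow := hM.posSemidef_sub_iInf_eigenvalues_smul_one
  have hle := hM.iInf_eigenvalues_le_one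
  generalize (⨅ j, hM.eigenvalues j) = μ at hlow hle ⊢
  have hMs := transpose_posSemidefSqrtOld hW.posSemidef
  have hMM := posSemidefSqrtOld_mul_self hW.posSemidef
  generalize posSemidefSqrtOld hW.posSemidef = M at hMs hMM hlow hle
  have hMdet : IsUnit M.det := isUnit_iff_ne_zero.mpr fun h =>
    hW.det_pos.ne' (by rw [← hMM, det_mul, h, zero_mul])
  have hWsym : Wᵀ = W := (conjTranspose_eq_transpose_of_trivial W).symm.trans hW.isHermitian
  have hP i : IsStarProjection (M * ZmatSym A W (S i) * M) :=
    isStarProjection_mul_mul_of_mul_mul_self hMs hMM (transpose_ZmatSym hAsym hWsym)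
      (ZmatSym_mul_mul_self hA hAsym hW (hS i))
  have hMbar : M * (∑ i, p i • ZmatSym A W (S i)) * M =
      ∑ i, p i • (M * ZmatSym A W (S i) * M) := by
    simp only [Matrix.mul_sum, Matrix.sum_mul, mul_smul_comm, smul_mul_assoc]
  rw [hMbar] at hlow hle
  have hp0 i : 0 ≤ p i := (hp i).le
  have hρ : 0 ≤ 1 - μ := sub_nonneg.mpr (hle (posSemidef_one_sub_sum_smul hP hp0 hsum))
  exact sum_prod_mul_foldl_ofFn_le_pow (fun i X => symStep A W (S i) X)
    (fun X => wFNormSq W (X - A⁻¹)) hp0 hρ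
    (sum_mul_wFNormSq_symStep_sub_le hMdet hMs hMM hP hp0 hsum hlow) k X0

theorem stmt13 {n r : ℕ} (hn : 0 < n) (A W : Matrix (Fin n) (Fin n) ℝ)
    (q : Fin r → ℕ) (S : ∀ i, Matrix (Fin n) (Fin (q i)) ℝ)
    (hA : IsUnit A.det) (hAsym : Aᵀ = A) (hW : W.PosDef)
    (hS : ∀ i, (S i).rank = q i)
    (p : Fin r → ℝ) (hp : ∀ i, 0 < p i) (hsum : ∑ i, p i = 1)
    (X0 : Matrix (Fin n) (Fin n) ℝ) (hX0 : X0ᵀ = X0) (k : ℕ)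
    (hM : (posSemidefSqrtOld hW.posSemidef * (∑ i, p i • ZmatSym A W (S i)) *
      posSemidefSqrtOld hW.posSemidef).IsHermitian) :
    ∑ s : Fin k → Fin r, (∏ j, p (s j)) *
        wFNormSq W ((List.ofFn s).foldl (fun X i => symStep A W (S i) X) X0 - A⁻¹) ≤
      (1 - ⨅ j, hM.eigenvalues j) ^ k * wFNormSq W (X0 - A⁻¹) :=
  stmt13_general A W q S hA hAsym hW hS p hp hsum X0 k hM
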